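/- Let 0 < p < 1 and 0 < q < 1 be constants, let G = G(n,p) and H = H(m,q) be independent Erdős–Rényi random graphs on n and m vertices with m ≤ n, let s = pq + (1−p)(1−q), and let k be a positive integer with k ≤ m. Then the probability that there exist a k-element vertex subset S₁ of G and a k-element vertex subset S₂ of H whose induced subgraphs are isomorphic is at most n^{2k}·s^{k(k−1)/2}. -/

import Mathlib

/-!
STATEMENT 13: Let 0 < p < 1 and 0 < q < 1 be constants, let G = G(n,p) and H = H(m,q) be
independent Erdős–Rényi random graphs on n and m vertices with m ≤ n, let
s = pq + (1−p)(1−q), and let k be a positive integer with k ≤ m. Then the probability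
that there exist a k-element vertex subset S₁ of G and a k-element vertex subset S₂ of H
whose induced subgraphs are isomorphic is at most n^{2k}·s^{k(k−1)/2}.
-/

open Classical

/-- Unordered pairs of distinct elements of `α`: the edge indicator index set. -/
abbrev EI (α : Type*) := {e : Sym2 α // ¬ e.IsDiag}

/-- The simple graph determined by an outcome of the edge indicators. -/
def erGraph {n : ℕ} (ω : EI (Fin n) → Bool) : SimpleGraph (Fin n) where
  Adj u v := ∃ h : u ≠ v, ω ⟨s(u, v), by simp [h]⟩ = true
  symm := by
    constructor
    rintro u v ⟨h, hw⟩
    refine ⟨h.symm, ?_⟩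
    rwa [show (⟨s(v, u), by simp [h.symm]⟩ : EI (Fin n)) =
        ⟨s(u, v), by simp [h]⟩ from Subtype.ext (Sym2.eq_swap)]
  loopless := by constructor; rintro v ⟨h, -⟩; exact h rfl

/-- Probability of an event for the joint (independent) pair of Erdős–Rényi random
graphs `G(n,p)` and `H(m,q)`, given by independent Bernoulli edge indicators. -/
noncomputable def jointProb (n m : ℕ) (p q : ℝ)
    (A : (EI (Fin n) → Bool) → (EI (Fin m) → Bool) → Prop) : ℝ :=
  ∑ ω₁ : EI (Fin n) → Bool, ∑ ω₂ : EI (Fin m) → Bool,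
    if A ω₁ ω₂ then
      (∏ e : EI (Fin n), if ω₁ e then p else 1 - p) *
        (∏ f : EI (Fin m), if ω₂ f then q else 1 - q)
    else 0

lemma sum_prod_bool {I : Type*} [Fintype I] [DecidableEq I] (F : I → Bool → ℝ) :
    ∑ ω : I → Bool, ∏ i, F i (ω i) = ∏ i, (F i true + F i false) := by
  classical
  have : ∀ i, F i true + F i false = ∑ b : Bool, F i b := by intro i; simp
  simp_rw [this]
  rw [Fintype.prod_sum]

lemma sum_weighted {I D : Type*} [Fintype I] [DecidableEq I] [Fintype D] [DecidableEq D]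
    (φ : D → I) (hφ : Function.Injective φ) (w : Bool → ℝ) (hw : w true + w false = 1)
    (g : D → Bool → ℝ) :
    ∑ ω : I → Bool, (∏ e, w (ω e)) * ∏ d, g d (ω (φ d)) =
      ∏ d, (w true * g d true + w false * g d false) := by
  classical
  have key : ∀ ω : I → Bool,
      (∏ e, w (ω e)) * ∏ d, g d (ω (φ d)) =
      ∏ e, (w (ω e) * ∏ d, if φ d = e then g d (ω e) else 1) := by
    intro ω
    rw [Finset.prod_mul_distrib]
    congr 1
    calc ∏ d, g d (ω (φ d)) = ∏ d, ∏ e, (if φ d = e then g d (ω e) else 1) := by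
          refine Finset.prod_congr rfl fun d _ => ?_
          rw [Finset.prod_ite_eq]
          simp
      _ = ∏ e, ∏ d, (if φ d = e then g d (ω e) else 1) := Finset.prod_comm
  simp_rw [key]
  rw [sum_prod_bool (fun e b => w b * ∏ d, if φ d = e then g d b else 1)]
  have step : ∀ e, (w true * ∏ d, (if φ d = e then g d true else 1) +
      w false * ∏ d, (if φ d = e then g d false else 1)) =
      ∏ d, (if φ d = e then (w true * g d true + w false * g d false) else 1) := by
    intro e
    by_cases he : ∃ d, φ d = e
    · obtain ⟨d₀, rfl⟩ := he
      have h1 : ∀ G : D → ℝ, (∏ d, if φ d = φ d₀ then G d else 1) = G d₀ := by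
        intro G
        have : ∀ d, (if φ d = φ d₀ then G d else 1) = (if d = d₀ then G d else 1) := by
          intro d; simp [hφ.eq_iff]
        simp_rw [this]
        rw [Finset.prod_ite_eq']
        simp
      rw [h1, h1, h1]
    · push_neg at he
      simp [he, hw]
  simp_rw [step]
  rw [Finset.prod_comm]
  refine Finset.prod_congr rfl fun d _ => ?_
  rw [Finset.prod_ite_eq]
  simp

lemma jointProb_pair (p q : ℝ) (n m k : ℕ)
    (φ : EI (Fin k) → EI (Fin n)) (hφ : Function.Injective φ)
    (ψ : EI (Fin k) → EI (Fin m)) (hψ : Function.Injective ψ) :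
    jointProb n m p q (fun ω₁ ω₂ => ∀ d, ω₁ (φ d) = ω₂ (ψ d)) =
      (p * q + (1 - p) * (1 - q)) ^ (Fintype.card (EI (Fin k))) := by
  classical
  unfold jointProb
  have inner : ∀ ω₁ : EI (Fin n) → Bool,
      (∑ ω₂ : EI (Fin m) → Bool, @ite ℝ (∀ d, ω₁ (φ d) = ω₂ (ψ d))
        (Classical.propDecidable _)
        ((∏ e : EI (Fin n), if ω₁ e then p else 1 - p) *
          (∏ f : EI (Fin m), if ω₂ f then q else 1 - q)) 0)
      = (∏ e : EI (Fin n), if ω₁ e then p else 1 - p) *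
          ∏ d, (if ω₁ (φ d) then q else 1 - q) := by
    intro ω₁
    have pw : ∀ ω₂ : EI (Fin m) → Bool,
        (@ite ℝ (∀ d, ω₁ (φ d) = ω₂ (ψ d)) (Classical.propDecidable _)
          ((∏ e : EI (Fin n), if ω₁ e then p else 1 - p) *
            (∏ f : EI (Fin m), if ω₂ f then q else 1 - q)) 0)
        = (∏ e : EI (Fin n), if ω₁ e then p else 1 - p) *
            ((∏ f : EI (Fin m), if ω₂ f then q else 1 - q) *
              ∏ d, (if ω₁ (φ d) = ω₂ (ψ d) then (1 : ℝ) else 0)) := by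
      intro ω₂
      by_cases h : ∀ d, ω₁ (φ d) = ω₂ (ψ d)
      · simp [h]
      · obtain ⟨d, hd⟩ := not_forall.1 h
        rw [if_neg h, Finset.prod_eq_zero (Finset.mem_univ d) (by simp [hd]),
          mul_zero, mul_zero]
    simp_rw [pw, ← Finset.mul_sum]
    congr 1
    rw [sum_weighted ψ hψ (fun b => if b then q else 1 - q) (by norm_num)
      (fun d b => if ω₁ (φ d) = b then (1 : ℝ) else 0)]
    refine Finset.prod_congr rfl fun d _ => ?_
    cases h : ω₁ (φ d) <;> simp [h]
  beta_reduce
  rw [Finset.sum_congr rfl fun ω₁ _ => inner ω₁]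
  rw [sum_weighted φ hφ (fun b => if b then p else 1 - p) (by norm_num)
    (fun _ b => if b then q else 1 - q)]
  simp [Finset.prod_const, mul_comm]

lemma jointProb_le_sum {n m : ℕ} {p q : ℝ} (hp0 : 0 ≤ p) (hp1 : p ≤ 1) (hq0 : 0 ≤ q)
    (hq1 : q ≤ 1) {ι : Type*} [Fintype ι]
    (A : (EI (Fin n) → Bool) → (EI (Fin m) → Bool) → Prop)
    (B : ι → (EI (Fin n) → Bool) → (EI (Fin m) → Bool) → Prop)
    (h : ∀ ω₁ ω₂, A ω₁ ω₂ → ∃ x, B x ω₁ ω₂) :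
    jointProb n m p q A ≤ ∑ x : ι, jointProb n m p q (B x) := by
  classical
  have main : ∀ (ω₁ : EI (Fin n) → Bool) (ω₂ : EI (Fin m) → Bool),
      (if A ω₁ ω₂ then
        (∏ e : EI (Fin n), if ω₁ e then p else 1 - p) *
          (∏ f : EI (Fin m), if ω₂ f then q else 1 - q) else 0)
      ≤ ∑ x : ι, (if B x ω₁ ω₂ then
        (∏ e : EI (Fin n), if ω₁ e then p else 1 - p) *
          (∏ f : EI (Fin m), if ω₂ f then q else 1 - q) else 0) := by
    intro ω₁ ω₂
    set W : ℝ := (∏ e : EI (Fin n), if ω₁ e then p else 1 - p) *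
        (∏ f : EI (Fin m), if ω₂ f then q else 1 - q) with hW
    have hW0 : 0 ≤ W := by
      apply mul_nonneg <;> exact Finset.prod_nonneg fun i _ => by
        split <;> linarith
    have hterm : ∀ x : ι, 0 ≤ (if B x ω₁ ω₂ then W else 0) := by
      intro x; split <;> simp [hW0]
    by_cases hA : A ω₁ ω₂
    · obtain ⟨x, hx⟩ := h ω₁ ω₂ hA
      rw [if_pos hA]
      calc W = (if B x ω₁ ω₂ then W else 0) := by rw [if_pos hx]
        _ ≤ _ := Finset.single_le_sum (fun x _ => hterm x) (Finset.mem_univ x)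
    · rw [if_neg hA]
      exact Finset.sum_nonneg fun x _ => hterm x
  calc jointProb n m p q A
      ≤ ∑ ω₁ : EI (Fin n) → Bool, ∑ ω₂ : EI (Fin m) → Bool, ∑ x : ι,
          (if B x ω₁ ω₂ then
            (∏ e : EI (Fin n), if ω₁ e then p else 1 - p) *
              (∏ f : EI (Fin m), if ω₂ f then q else 1 - q) else 0) :=
        Finset.sum_le_sum fun ω₁ _ => Finset.sum_le_sum fun ω₂ _ => main ω₁ ω₂
    _ = ∑ x : ι, jointProb n m p q (B x) := by
        rw [Finset.sum_congr rfl fun ω₁ (_ : ω₁ ∈ Finset.univ) =>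
          (Finset.sum_comm (γ := EI (Fin m) → Bool) (α := ι))]
        exact Finset.sum_comm

/-- Map on edge-index sets induced by an embedding of vertex sets. -/
def emap {k n : ℕ} (f : Fin k ↪ Fin n) : EI (Fin k) → EI (Fin n) :=
  fun d => ⟨d.1.map f, fun h => d.2 ((Sym2.isDiag_map f.injective).1 h)⟩

lemma emap_injective {k n : ℕ} (f : Fin k ↪ Fin n) : Function.Injective (emap f) :=
  fun d d' h => Subtype.ext (Sym2.map.injective f.injective (congrArg Subtype.val h))

lemma bool_ext {a b : Bool} (h : a = true ↔ b = true) : a = b := by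
  cases a <;> cases b <;> simp_all

theorem prob_common_subgraph_le (p q : ℝ) (hp0 : 0 < p) (hp1 : p < 1) (hq0 : 0 < q)
    (hq1 : q < 1) (n m k : ℕ) (hmn : m ≤ n) (hk : 0 < k) (hkm : k ≤ m) :
    jointProb n m p q (fun ω₁ ω₂ =>
        ∃ S₁ : Finset (Fin n), S₁.card = k ∧ ∃ S₂ : Finset (Fin m), S₂.card = k ∧
          Nonempty ((erGraph ω₁).induce (S₁ : Set (Fin n)) ≃g
            (erGraph ω₂).induce (S₂ : Set (Fin m)))) ≤
      (n : ℝ) ^ (2 * k) * (p * q + (1 - p) * (1 - q)) ^ (k * (k - 1) / 2) := by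
  classical
  set s : ℝ := p * q + (1 - p) * (1 - q) with hs
  have hs0 : 0 ≤ s := by
    apply add_nonneg (mul_nonneg hp0.le hq0.le)
    apply mul_nonneg <;> linarith
  set ι := (Fin k ↪ Fin n) × (Fin k ↪ Fin m)
  set B : ι → (EI (Fin n) → Bool) → (EI (Fin m) → Bool) → Prop :=
    fun x ω₁ ω₂ => ∀ d, ω₁ (emap x.1 d) = ω₂ (emap x.2 d) with hB
  have himp : ∀ ω₁ ω₂, (∃ S₁ : Finset (Fin n), S₁.card = k ∧
      ∃ S₂ : Finset (Fin m), S₂.card = k ∧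
        Nonempty ((erGraph ω₁).induce (S₁ : Set (Fin n)) ≃g
          (erGraph ω₂).induce (S₂ : Set (Fin m)))) → ∃ x : ι, B x ω₁ ω₂ := by
    rintro ω₁ ω₂ ⟨S₁, hS₁, S₂, hS₂, ⟨e⟩⟩
    set o₁ := S₁.orderIsoOfFin hS₁
    have mem1 : ∀ i : Fin k, ((o₁ i : Fin n)) ∈ (S₁ : Set (Fin n)) := fun i => by
      simpa using (o₁ i).2
    set f : Fin k ↪ Fin n :=
      ⟨fun i => (o₁ i : Fin n), fun i j h =>
        o₁.injective (Subtype.ext h)⟩ with hf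
    set g : Fin k ↪ Fin m :=
      ⟨fun i => (e ⟨(o₁ i : Fin n), mem1 i⟩ : Fin m), fun i j h => by
        have := e.injective (Subtype.ext h)
        exact o₁.injective (Subtype.ext (congrArg Subtype.val this))⟩ with hg
    refine ⟨⟨f, g⟩, ?_⟩
    rintro ⟨d, hd⟩
    induction d using Sym2.ind with
    | _ i j =>
    have hij : i ≠ j := fun h => hd (by simp [h])
    have hfij : f i ≠ f j := f.injective.ne hij
    have hgij : g i ≠ g j := g.injective.ne hij
    have hadj : (erGraph ω₁).Adj (f i) (f j) ↔ (erGraph ω₂).Adj (g i) (g j) := by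
      have := e.map_adj_iff (v := ⟨(o₁ i : Fin n), mem1 i⟩)
        (w := ⟨(o₁ j : Fin n), mem1 j⟩)
      simp [SimpleGraph.comap, SimpleGraph.induce, hf, hg] at this
      exact this.symm
    have h1 : emap f ⟨s(i, j), hd⟩ = ⟨s(f i, f j), by simp [hfij]⟩ :=
      Subtype.ext (Sym2.map_pair_eq f i j)
    have h2 : emap g ⟨s(i, j), hd⟩ = ⟨s(g i, g j), by simp [hgij]⟩ :=
      Subtype.ext (Sym2.map_pair_eq g i j)
    rw [h1, h2]
    apply bool_ext
    constructor
    · intro h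
      obtain ⟨h', hw⟩ := hadj.1 ⟨hfij, h⟩
      exact hw
    · intro h
      obtain ⟨h', hw⟩ := hadj.2 ⟨hgij, h⟩
      exact hw
  have hN : Fintype.card (EI (Fin k)) = k * (k - 1) / 2 := by
    rw [Sym2.card_subtype_not_diag, Fintype.card_fin, Nat.choose_two_right]
  calc jointProb n m p q _ ≤ ∑ x : ι, jointProb n m p q (B x) :=
        jointProb_le_sum hp0.le hp1.le hq0.le hq1.le _ B himp
    _ = (Fintype.card ι : ℝ) * s ^ (k * (k - 1) / 2) := by
        rw [Finset.sum_congr rfl fun x _ =>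
          (jointProb_pair p q n m k (emap x.1) (emap_injective x.1)
            (emap x.2) (emap_injective x.2))]
        rw [Finset.sum_const, Finset.card_univ, nsmul_eq_mul, hN]
    _ ≤ (n : ℝ) ^ (2 * k) * s ^ (k * (k - 1) / 2) := by
        refine mul_le_mul_of_nonneg_right ?_ (pow_nonneg hs0 _)
        have hcard : Fintype.card ι ≤ n ^ (2 * k) := by
          rw [Fintype.card_prod, Fintype.card_embedding_eq, Fintype.card_embedding_eq,
            Fintype.card_fin, Fintype.card_fin, Fintype.card_fin]
          calc n.descFactorial k * m.descFactorial k ≤ n ^ k * m ^ k :=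
                Nat.mul_le_mul (Nat.descFactorial_le_pow n k) (Nat.descFactorial_le_pow m k)
            _ ≤ n ^ k * n ^ k := Nat.mul_le_mul_left _ (Nat.pow_le_pow_left hmn k)
            _ = n ^ (2 * k) := by rw [← pow_add, two_mul]
        calc (Fintype.card ι : ℝ) ≤ ((n ^ (2 * k) : ℕ) : ℝ) := Nat.cast_le.2 hcard
          _ = (n : ℝ) ^ (2 * k) := by push_cast; ring
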